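/- arXiv:1902.05056 — 4 statements merged into one kernel-verified Lean document; each statement's English description precedes it below -/
import Mathlib

section
/- Let Q be the thin category of a finite linear order and let W ⊆ Mor(Q) satisfy the 2-out-of-6 property. If f ∈ Mor(Q) is sent to an isomorphism by the localization functor Q → Q[W⁻¹], then f ∈ W. -/
/-!
Call `a ≤ b` linked when the arrow between them lies in `W`; by 2-out-of-6 this is an
equivalence relation. Let `m t` be the largest element linked to `t`. If `u ⟶ v` lies in `W`,
`u ≤ t ≤ v` and `t` is not linked to `u`, then `m t < v ≤ m u`, since 2-out-of-6 applied to
`u ≤ t ≤ v ≤ m t` would link `t` to `u`. Hence the functor to `Type` sending `u` to `[m u, ∞)` and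
`u ⟶ v` to `a ↦ max a (max_{[u, v]} m)` inverts `W`, so it factors through `Q[W⁻¹]`; and it
sends `x ⟶ y` to a bijection only if `m x = m y`, i.e. only if `x ⟶ y` lies in `W`.
-/

open CategoryTheory

/-- A class of morphisms satisfies the 2-out-of-6 property if it contains all identities
and whenever `g ∘ f ∈ W` and `h ∘ g ∈ W` for a composable triple, then
`f, g, h, h ∘ g ∘ f ∈ W`. -/
def TwoOutOfSix {C : Type*} [Category C] (W : MorphismProperty C) : Prop :=
  (∀ X : C, W (𝟙 X)) ∧
  ∀ ⦃a b c d : C⦄ (f : a ⟶ b) (g : b ⟶ c) (h : c ⟶ d),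
    W (f ≫ g) → W (g ≫ h) → W f ∧ W g ∧ W h ∧ W (f ≫ g ≫ h)

/-- The 2-out-of-6 closure of a class of morphisms: the smallest class containing `W`
and all identities which satisfies the 2-out-of-6 property. -/
inductive Closure {C : Type*} [Category C] (W : MorphismProperty C) :
    ∀ ⦃X Y : C⦄, (X ⟶ Y) → Prop
  | of {X Y : C} (f : X ⟶ Y) : W f → Closure W f
  | id (X : C) : Closure W (𝟙 X)
  | left {a b c d : C} (f : a ⟶ b) (g : b ⟶ c) (h : c ⟶ d) :
      Closure W (f ≫ g) → Closure W (g ≫ h) → Closure W f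
  | mid {a b c d : C} (f : a ⟶ b) (g : b ⟶ c) (h : c ⟶ d) :
      Closure W (f ≫ g) → Closure W (g ≫ h) → Closure W g
  | right {a b c d : C} (f : a ⟶ b) (g : b ⟶ c) (h : c ⟶ d) :
      Closure W (f ≫ g) → Closure W (g ≫ h) → Closure W h
  | comp {a b c d : C} (f : a ⟶ b) (g : b ⟶ c) (h : c ⟶ d) :
      Closure W (f ≫ g) → Closure W (g ≫ h) → Closure W (f ≫ g ≫ h)

/-- The 2-out-of-6 closure, as a `MorphismProperty`. -/
def tosClosure {C : Type*} [Category C] (W : MorphismProperty C) : MorphismProperty C :=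
  fun _ _ f => Closure W f

lemma CategoryTheory.MorphismProperty.IsInvertedBy.isIso_map_of_isIso_Q_map {C D : Type*}
    [Category C] [Category D] {W : MorphismProperty C} {G : C ⥤ D} (hG : W.IsInvertedBy G) {x y : C}
    (f : x ⟶ y) (hf : IsIso (W.Q.map f)) : IsIso (G.map f) := by
  rw [← Localization.Construction.fac G hG]
  exact Functor.map_isIso (Localization.Construction.lift G hG) (W.Q.map f)

section CeilingFunctor

variable {ι α : Type*} [LinearOrder ι] [LocallyFiniteOrder ι] [LinearOrder α] (h : ι → α)

noncomputable def intervalMax {u v : ι} (huv : u ≤ v) : α :=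
  (Finset.Icc u v).sup' (Finset.nonempty_Icc.2 huv) h

lemma le_intervalMax {u v t : ι} (huv : u ≤ v) (hut : u ≤ t) (htv : t ≤ v) :
    h t ≤ intervalMax h huv :=
  Finset.le_sup' h (Finset.mem_Icc.2 ⟨hut, htv⟩)

lemma intervalMax_le_iff {u v : ι} (huv : u ≤ v) {a : α} :
    intervalMax h huv ≤ a ↔ ∀ t, u ≤ t → t ≤ v → h t ≤ a := by
  simp [intervalMax, Finset.sup'_le_iff]

lemma intervalMax_self (u : ι) : intervalMax h (le_refl u) = h u := by
  simp [intervalMax]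

lemma intervalMax_trans {u v w : ι} (huv : u ≤ v) (hvw : v ≤ w) :
    intervalMax h (huv.trans hvw) = max (intervalMax h huv) (intervalMax h hvw) := by
  refine le_antisymm ((intervalMax_le_iff h _).2 fun t hut htw => ?_) (max_le ?_ ?_)
  · rcases le_total t v with htv | hvt
    · exact (le_intervalMax h huv hut htv).trans (le_max_left _ _)
    · exact (le_intervalMax h hvw hvt htw).trans (le_max_right _ _)
  · exact (intervalMax_le_iff h _).2 fun t hut htv => le_intervalMax h _ hut (htv.trans hvw)
  · exact (intervalMax_le_iff h _).2 fun t hvt htw => le_intervalMax h _ (huv.trans hvt) htw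

noncomputable def ceilingFunctor : ι ⥤ Type _ where
  obj u := {a : α // h u ≤ a}
  map {u v} f := TypeCat.ofHom fun a =>
    ⟨max a.1 (intervalMax h (leOfHom f)),
      (le_intervalMax h (leOfHom f) (leOfHom f) le_rfl).trans (le_max_right _ _)⟩
  map_id u := by
    ext a
    show max a.1 _ = a.1
    rw [intervalMax_self, max_eq_left a.2]
  map_comp {u v w} f g := by
    ext a
    show max a.1 _ = max (max a.1 _) _
    rw [intervalMax_trans, max_assoc]

@[simp]
lemma ceilingFunctor_map_val {u v : ι} (f : u ⟶ v) (a : (ceilingFunctor h).obj u) :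
    ((ceilingFunctor h).map f a).1 = max a.1 (intervalMax h (leOfHom f)) :=
  rfl

lemma isIso_ceilingFunctor_map_iff {u v : ι} (f : u ⟶ v) :
    IsIso ((ceilingFunctor h).map f) ↔ h u = h v ∧ ∀ t, u ≤ t → t ≤ v → h t ≤ h u := by
  have huv := leOfHom f
  have hu : h u ≤ intervalMax h huv := le_intervalMax h huv le_rfl huv
  have hv : h v ≤ intervalMax h huv := le_intervalMax h huv huv le_rfl
  rw [isIso_iff_bijective, ← intervalMax_le_iff h huv]
  constructor
  · rintro ⟨hinj, hsurj⟩
    have hMu : intervalMax h huv = h u := by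
      have hval :
          max (h u) (intervalMax h huv) = max (intervalMax h huv) (intervalMax h huv) := by
        simp [hu]
      exact (congrArg Subtype.val
        (@hinj ⟨h u, le_rfl⟩ ⟨intervalMax h huv, hu⟩ (Subtype.ext hval))).symm
    obtain ⟨a, ha⟩ := hsurj ⟨h v, le_rfl⟩
    have hMv : intervalMax h huv ≤ h v := (le_max_right a.1 _).trans_eq (congrArg Subtype.val ha)
    exact ⟨hMu.symm.trans (le_antisymm hMv hv), hMu.le⟩
  · rintro ⟨hvu, hM⟩
    have hfix : ∀ a, ((ceilingFunctor h).map f a).1 = a.1 := fun a => by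
      simp [le_antisymm hM hu, a.2]
    refine ⟨fun a b hab => Subtype.ext ?_,
      fun b => ⟨⟨b.1, hvu.trans_le b.2⟩, Subtype.ext (hfix _)⟩⟩
    rw [← hfix a, ← hfix b, hab]

end CeilingFunctor

section TwoOutOfSixLinearOrder

variable {ι : Type*} [LinearOrder ι] {W : MorphismProperty ι}

variable (W) in
def WRel (a b : ι) : Prop := ∃ hab : a ≤ b, W (homOfLE hab)

variable (W) in
def WLinked (a b : ι) : Prop := WRel W a b ∨ WRel W b a

lemma WRel.of_hom {a b : ι} (f : a ⟶ b) (hf : W f) : WRel W a b :=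
  ⟨leOfHom f, hf⟩

lemma WRel.mem {a b : ι} (h : WRel W a b) (f : a ⟶ b) : W f := by
  obtain ⟨hab, hW⟩ := h
  rwa [Subsingleton.elim f (homOfLE hab)]

lemma WLinked.symm {a b : ι} (h : WLinked W a b) : WLinked W b a :=
  Or.symm h

lemma WLinked.wRel_of_le {a b : ι} (h : WLinked W a b) (hab : a ≤ b) : WRel W a b := by
  rcases h with h | ⟨hba, hW⟩
  · exact h
  · obtain rfl := le_antisymm hab hba
    exact ⟨hab, hW⟩

namespace TwoOutOfSix

lemma wRel_refl (hW : TwoOutOfSix W) (a : ι) : WRel W a a :=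
  ⟨le_rfl, by simpa using hW.1 a⟩

lemma wRel (hW : TwoOutOfSix W) {a b c d : ι} (hab : a ≤ b) (hbc : b ≤ c)
    (hcd : c ≤ d) (hac : WRel W a c) (hbd : WRel W b d) :
    WRel W a b ∧ WRel W b c ∧ WRel W c d ∧ WRel W a d := by
  obtain ⟨f, g, h, hfgh⟩ := hW.2 (homOfLE hab) (homOfLE hbc) (homOfLE hcd)
    (hac.mem _) (hbd.mem _)
  exact ⟨.of_hom _ f, .of_hom _ g, .of_hom _ h, .of_hom _ hfgh⟩

lemma wRel_trans (hW : TwoOutOfSix W) {a b c : ι} (hab : WRel W a b) (hbc : WRel W b c) :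
    WRel W a c :=
  (hW.wRel hab.1 le_rfl hbc.1 hab hbc).2.2.2

lemma wRel_of_wLinked_of_wLinked (hW : TwoOutOfSix W) {a b c : ι} (hab : WLinked W a b)
    (hbc : WLinked W b c) (hac : a ≤ c) : WRel W a c := by
  rcases le_total b a with hba | hab'
  · exact (hW.wRel le_rfl hba hac (hab.symm.wRel_of_le hba) (hbc.wRel_of_le
      (hba.trans hac))).2.2.1
  rcases le_total b c with hbc' | hcb
  · exact hW.wRel_trans (hab.wRel_of_le hab') (hbc.wRel_of_le hbc')
  · exact (hW.wRel hac hcb le_rfl (hab.wRel_of_le hab') (hbc.symm.wRel_of_le hcb)).1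

lemma wLinked_equivalence (hW : TwoOutOfSix W) : Equivalence (WLinked W) where
  refl a := .inl (hW.wRel_refl a)
  symm := WLinked.symm
  trans {a _ c} hab hbc := (le_total a c).imp (hW.wRel_of_wLinked_of_wLinked hab hbc)
    (hW.wRel_of_wLinked_of_wLinked hbc.symm hab.symm)

end TwoOutOfSix

end TwoOutOfSixLinearOrder

section LinkedMax

variable {ι : Type*} [LinearOrder ι] [Fintype ι] {W : MorphismProperty ι}

variable (W) in
open Classical in
noncomputable def linkedMax (t : ι) : ι :=
  (insert t (Finset.univ.filter (WLinked W t))).max' (Finset.insert_nonempty _ _)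

lemma le_linkedMax {t s : ι} (h : WLinked W t s) : s ≤ linkedMax W t :=
  Finset.le_max' _ _ (by simp [h])

lemma self_le_linkedMax (t : ι) : t ≤ linkedMax W t :=
  Finset.le_max' _ _ (Finset.mem_insert_self _ _)

namespace TwoOutOfSix

open Classical in
lemma wLinked_linkedMax (hW : TwoOutOfSix W) (t : ι) : WLinked W t (linkedMax W t) := by
  have hmem : linkedMax W t ∈ insert t (Finset.univ.filter (WLinked W t)) :=
    Finset.max'_mem _ _
  rw [Finset.mem_insert, Finset.mem_filter] at hmem
  rcases hmem with h | ⟨-, h⟩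
  · rw [h]
    exact .inl (hW.wRel_refl t)
  · exact h

lemma linkedMax_eq_iff (hW : TwoOutOfSix W) {t u : ι} :
    linkedMax W t = linkedMax W u ↔ WLinked W t u := by
  have hlink := hW.wLinked_equivalence
  constructor
  · intro h
    exact hlink.trans (hW.wLinked_linkedMax t) (h ▸ (hW.wLinked_linkedMax u).symm)
  · intro h
    exact le_antisymm (le_linkedMax (hlink.trans h.symm (hW.wLinked_linkedMax t)))
      (le_linkedMax (hlink.trans h (hW.wLinked_linkedMax u)))

lemma linkedMax_le_of_wRel (hW : TwoOutOfSix W) {u v t : ι} (huv : WRel W u v) (hut : u ≤ t)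
    (htv : t ≤ v) : linkedMax W t ≤ linkedMax W u := by
  by_cases hlink : WLinked W u t
  · exact ((hW.linkedMax_eq_iff).2 hlink).ge
  have hlt : linkedMax W t < v := lt_of_not_ge fun hvs => hlink <| .inl
    (hW.wRel hut htv hvs huv
      ((hW.wLinked_linkedMax t).wRel_of_le (self_le_linkedMax t))).1
  exact hlt.le.trans (le_linkedMax (.inl huv))

end TwoOutOfSix

end LinkedMax

theorem TwoOutOfSix.mem_of_isIso_Q_map {ι : Type*} [LinearOrder ι] [Fintype ι]
    [LocallyFiniteOrder ι] {W : MorphismProperty ι} (hW : TwoOutOfSix W) {x y : ι} (f : x ⟶ y)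
    (hf : IsIso (W.Q.map f)) : W f := by
  have hG : W.IsInvertedBy (ceilingFunctor (linkedMax W)) := fun u v g hg =>
    (isIso_ceilingFunctor_map_iff _ g).2 ⟨hW.linkedMax_eq_iff.2 (.inl (.of_hom g hg)),
      fun _ => hW.linkedMax_le_of_wRel (.of_hom g hg)⟩
  obtain ⟨hxy, -⟩ := (isIso_ceilingFunctor_map_iff _ f).1 (hG.isIso_map_of_isIso_Q_map f hf)
  exact ((hW.linkedMax_eq_iff.1 hxy).wRel_of_le (leOfHom f)).mem f

/-- In the thin category of a finite linear order, if `W` satisfies the 2-out-of-6 property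
and `f` is sent to an isomorphism by the localization functor `Q ⥤ Q[W⁻¹]`, then `f ∈ W`. -/
theorem stmt7 (n : ℕ) (W : MorphismProperty (Fin n)) (hW : TwoOutOfSix W)
    {x y : Fin n} (f : x ⟶ y) (hf : IsIso (W.Q.map f)) : W f :=
  hW.mem_of_isIso_Q_map f hf
end

section
/- Let Q be the thin category of a finite linear order and let W ⊆ Mor(Q). A morphism f of Q lies in the 2-out-of-6 closure of W if and only if for every functor ρ: Q → D (D any category) sending every morphism of W to an isomorphism, ρ(f) is an isomorphism. -/
open CategoryTheory

universe u v

lemma isoSix {C : Type*} [Category C] {a b c d : C} (f : a ⟶ b) (g : b ⟶ c) (h : c ⟶ d)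
    (h1 : IsIso (f ≫ g)) (h2 : IsIso (g ≫ h)) : IsIso f ∧ IsIso g ∧ IsIso h := by
  have hg : IsIso g := by
    refine ⟨h ≫ inv (g ≫ h), ?_, ?_⟩
    · rw [← Category.assoc, IsIso.hom_inv_id]
    · have hw : (inv (f ≫ g) ≫ f) ≫ g = 𝟙 c := by
        rw [Category.assoc, IsIso.inv_hom_id]
      have he : h ≫ inv (g ≫ h) = inv (f ≫ g) ≫ f := by
        calc h ≫ inv (g ≫ h) = 𝟙 c ≫ (h ≫ inv (g ≫ h)) := by rw [Category.id_comp]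
        _ = ((inv (f ≫ g) ≫ f) ≫ g) ≫ (h ≫ inv (g ≫ h)) := by rw [hw]
        _ = (inv (f ≫ g) ≫ f) ≫ (g ≫ (h ≫ inv (g ≫ h))) := by simp only [Category.assoc]
        _ = inv (f ≫ g) ≫ f := by rw [← Category.assoc g h, IsIso.hom_inv_id, Category.comp_id]
      rw [he, Category.assoc, IsIso.inv_hom_id]
  refine ⟨?_, hg, ?_⟩
  · exact IsIso.of_isIso_comp_right f g
  · exact IsIso.of_isIso_comp_left g h

section Helpers
variable {n : ℕ} (W : MorphismProperty (Fin n))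

lemma closure_cast {p q : Fin n} {f g : p ⟶ q} (h : Closure W f) : Closure W g :=
  Subsingleton.elim f g ▸ h

def clo (a b : Fin n) : Prop := ∃ h : a ≤ b, Closure W (homOfLE h)

lemma closure_iff {a b : Fin n} (f : a ⟶ b) : Closure W f ↔ clo W a b :=
  ⟨fun h => ⟨leOfHom f, closure_cast W h⟩, fun ⟨_, h⟩ => closure_cast W h⟩

lemma clo_refl (a : Fin n) : clo W a a :=
  ⟨le_refl a, closure_cast W (Closure.id a)⟩

lemma clo_six {a b c d : Fin n} (hab : a ≤ b) (hbc : b ≤ c) (hcd : c ≤ d)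
    (h1 : clo W a c) (h2 : clo W b d) :
    clo W a b ∧ clo W b c ∧ clo W c d ∧ clo W a d := by
  have e1 : Closure W (homOfLE hab ≫ homOfLE hbc) := closure_cast W h1.2
  have e2 : Closure W (homOfLE hbc ≫ homOfLE hcd) := closure_cast W h2.2
  exact ⟨⟨hab, Closure.left _ _ _ e1 e2⟩,
    ⟨hbc, Closure.mid _ _ _ e1 e2⟩,
    ⟨hcd, Closure.right _ _ _ e1 e2⟩,
    ⟨hab.trans (hbc.trans hcd), closure_cast W (Closure.comp _ _ _ e1 e2)⟩⟩

lemma clo_trans {a b c : Fin n} (h1 : clo W a b) (h2 : clo W b c) : clo W a c :=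
  (clo_six W h1.1 (le_refl b) h2.1 ⟨h1.1, h1.2⟩ h2).2.2.2

-- cancellation
lemma clo_left {a b c : Fin n} (hab : a ≤ b) (h1 : clo W a c) (h2 : clo W b c) :
    clo W a b :=
  (clo_six W hab h2.1 (le_refl c) h1 h2).1

lemma clo_right {a b c : Fin n} (hbc : b ≤ c) (h1 : clo W a b) (h2 : clo W a c) :
    clo W b c :=
  (clo_six W (le_refl a) h1.1 hbc h1 h2).2.2.1

def RR (a b : Fin n) : Prop := clo W a b ∨ clo W b a

lemma RR_refl (a : Fin n) : RR W a a := Or.inl (clo_refl W a)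
lemma RR_symm {a b : Fin n} (h : RR W a b) : RR W b a := h.symm
lemma RR_clo {a b : Fin n} (h : RR W a b) (hle : a ≤ b) : clo W a b := by
  rcases h with h | h
  · exact h
  · obtain rfl : a = b := le_antisymm hle h.1
    exact clo_refl W a

lemma RR_trans {a b c : Fin n} (h1 : RR W a b) (h2 : RR W b c) : RR W a c := by
  rcases h1 with h1 | h1 <;> rcases h2 with h2 | h2
  · exact Or.inl (clo_trans W h1 h2)
  · rcases le_total a c with hac | hca
    · exact Or.inl (clo_left W hac h1 h2)
    · exact Or.inr (clo_left W hca h2 h1)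
  · rcases le_total a c with hac | hca
    · exact Or.inl (clo_right W hac h1 h2)
    · exact Or.inr (clo_right W hca h2 h1)
  · exact Or.inr (clo_trans W h2 h1)

open Classical in
noncomputable def mnW (x : Fin n) : Fin n :=
  (Finset.univ.filter fun z => RR W x z).min' ⟨x, by simp [RR_refl]⟩

open Classical in
noncomputable def mxW (x : Fin n) : Fin n :=
  (Finset.univ.filter fun z => RR W x z).max' ⟨x, by simp [RR_refl]⟩

lemma RR_mn (x : Fin n) : RR W x (mnW W x) := by
  classical
  have := Finset.min'_mem (Finset.univ.filter fun z => RR W x z)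
    ⟨x, by simp [RR_refl]⟩
  simpa [mnW] using (Finset.mem_filter.mp this).2

lemma RR_mx (x : Fin n) : RR W x (mxW W x) := by
  classical
  have := Finset.max'_mem (Finset.univ.filter fun z => RR W x z)
    ⟨x, by simp [RR_refl]⟩
  simpa [mxW] using (Finset.mem_filter.mp this).2

lemma mn_le {x z : Fin n} (h : RR W x z) : mnW W x ≤ z := by
  classical
  exact Finset.min'_le _ z (by simp [mnW, h])

lemma le_mx {x z : Fin n} (h : RR W x z) : z ≤ mxW W x := by
  classical
  exact Finset.le_max' _ z (by simp [mxW, h])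

lemma mn_le_self (x : Fin n) : mnW W x ≤ x := mn_le W (RR_refl W x)
lemma self_le_mx (x : Fin n) : x ≤ mxW W x := le_mx W (RR_refl W x)

lemma clo_mn_mx (x : Fin n) : clo W (mnW W x) (mxW W x) :=
  RR_clo W (RR_trans W (RR_symm W (RR_mn W x)) (RR_mx W x))
    ((mn_le_self W x).trans (self_le_mx W x))

/-- membership in a class interval is respected by `clo`-related pairs -/
lemma compat (z₀ : Fin n) {a b : Fin n} (hab : a ≤ b) (h : clo W a b) :
    ((mnW W z₀ ≤ a ∧ a ≤ mxW W z₀) ↔ (mnW W z₀ ≤ b ∧ b ≤ mxW W z₀)) := by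
  constructor
  · rintro ⟨h1, h2⟩
    refine ⟨h1.trans hab, ?_⟩
    by_contra hb
    push_neg at hb
    have hmb : mxW W z₀ ≤ b := le_of_lt hb
    -- six on (mn, a, mx, b)
    have pieces := clo_six W h1 h2 hmb (clo_mn_mx W z₀) h
    -- clo mx b  ⇒ RR z₀ b ⇒ b ≤ mx : contra
    have : RR W z₀ b := RR_trans W (RR_mx W z₀) (Or.inl pieces.2.2.1)
    exact absurd (le_mx W this) (not_le.mpr hb)
  · rintro ⟨h1, h2⟩
    refine ⟨?_, hab.trans h2⟩
    by_contra ha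
    push_neg at ha
    have ham : a ≤ mnW W z₀ := le_of_lt ha
    -- six on (a, mn, b, mx)
    have pieces := clo_six W ham h1 h2 h (clo_mn_mx W z₀)
    have : RR W z₀ a := RR_trans W (RR_mn W z₀) (Or.inr pieces.1)
    exact absurd (mn_le W this) (not_le.mpr ha)

lemma dicho {x y : Fin n} (hxy : x ≤ y) (hR : ¬ RR W x y) :
    (¬ (mnW W x ≤ y ∧ y ≤ mxW W x)) ∨ (¬ (mnW W y ≤ x ∧ x ≤ mxW W y)) := by
  by_contra hcon
  push_neg at hcon
  obtain ⟨⟨h1, h2⟩, h3, h4⟩ := hcon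
  rcases le_total (mxW W x) (mxW W y) with hm | hm
  · have hyx : clo W y (mxW W y) := RR_clo W (RR_mx W y) (self_le_mx W y)
    have pieces := clo_six W h1 h2 hm (clo_mn_mx W x) hyx
    exact hR (RR_trans W (RR_mn W x) (Or.inl pieces.1))
  · have hxx : clo W x (mxW W x) := RR_clo W (RR_mx W x) (self_le_mx W x)
    have pieces := clo_six W h3 h4 hm (clo_mn_mx W y) hxx
    exact hR (RR_symm W (RR_trans W (RR_mn W y) (Or.inl pieces.1)))

lemma exists_P {x y : Fin n} (hxy : x ≤ y) (hR : ¬ RR W x y) :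
    ∃ P : Fin n → Prop,
      (∀ ⦃a b c : Fin n⦄, a ≤ b → b ≤ c → P a → P c → P b) ∧
      (∀ ⦃a b : Fin n⦄, a ≤ b → clo W a b → (P a ↔ P b)) ∧
      ¬ (P x ↔ P y) := by
  rcases dicho W hxy hR with hcase | hcase
  · refine ⟨fun k => mnW W x ≤ k ∧ k ≤ mxW W x, ?_, ?_, ?_⟩
    · rintro a b c hab hbc ⟨ha1, ha2⟩ ⟨hc1, hc2⟩
      exact ⟨ha1.trans hab, hbc.trans hc2⟩
    · exact fun a b hab h => compat W x hab h
    · intro hiff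
      exact hcase (hiff.mp ⟨mn_le_self W x, self_le_mx W x⟩)
  · refine ⟨fun k => mnW W y ≤ k ∧ k ≤ mxW W y, ?_, ?_, ?_⟩
    · rintro a b c hab hbc ⟨ha1, ha2⟩ ⟨hc1, hc2⟩
      exact ⟨ha1.trans hab, hbc.trans hc2⟩
    · exact fun a b hab h => compat W y hab h
    · intro hiff
      exact hcase (hiff.mpr ⟨mn_le_self W y, self_le_mx W y⟩)


structure DD {n : ℕ} (P : Fin n → Prop) : Type u where
  k : Fin n

abbrev pObj {n : ℕ} (P : Fin n → Prop) (k : Fin n) : Type := Option (PLift (P k))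

instance ddCat {n : ℕ} (P : Fin n → Prop) : Category.{v} (DD.{u} P) where
  Hom a b := ULift.{v} (pObj P a.k → pObj P b.k)
  id a := ⟨fun o => o⟩
  comp f g := ⟨fun o => g.down (f.down o)⟩

open Classical in
noncomputable def ρfun {n : ℕ} (P : Fin n → Prop)
    (hP : ∀ ⦃a b c : Fin n⦄, a ≤ b → b ≤ c → P a → P c → P b) :
    Fin n ⥤ DD.{u} P where
  obj k := ⟨k⟩
  map {k l} f := ⟨fun o => o.bind fun _ => if h : P l then some ⟨h⟩ else none⟩
  map_id k := by
    apply congrArg ULift.up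
    funext o
    cases o with
    | none => rfl
    | some pk => simp [pk.down]
  map_comp {k l m} f g := by
    apply congrArg ULift.up
    funext o
    cases o with
    | none => rfl
    | some pk =>
      show (if h : P m then some (PLift.up h) else none) = _
      by_cases hl : P l
      · simp [hl]
      · by_cases hm : P m
        · exact absurd (hP (leOfHom f) (leOfHom g) pk.down hm) hl
        · simp [hl, hm]

lemma dd_isIso_iff {n : ℕ} (P : Fin n → Prop) {a b : DD.{u} P} (m : a ⟶ b) :
    IsIso m ↔ Function.Bijective m.down := by
  constructor
  · intro hm
    refine Function.bijective_iff_has_inverse.mpr ⟨(inv m).down, fun o => ?_, fun o => ?_⟩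
    · have h := IsIso.hom_inv_id m
      exact congrFun (congrArg ULift.down h) o
    · have h := IsIso.inv_hom_id m
      exact congrFun (congrArg ULift.down h) o
  · intro hb
    let E := Equiv.ofBijective m.down hb
    refine ⟨⟨(⟨fun o => E.symm o⟩ : b ⟶ a), ?_, ?_⟩⟩
    · apply congrArg ULift.up
      funext o
      exact E.symm_apply_apply o
    · apply congrArg ULift.up
      funext o
      exact E.apply_symm_apply o

open Classical in
noncomputable def θ {n : ℕ} (P : Fin n → Prop) (a b : Fin n) : pObj P a → pObj P b :=
  fun o => o.bind fun _ => if h : P b then some ⟨h⟩ else none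

lemma ρfun_map {n : ℕ} (P : Fin n → Prop)
    (hP : ∀ ⦃a b c : Fin n⦄, a ≤ b → b ≤ c → P a → P c → P b)
    {a b : Fin n} (f : a ⟶ b) : ((ρfun.{u} P hP).map f).down = θ P a b := rfl

lemma pObj_eq_none {n : ℕ} {P : Fin n → Prop} {k : Fin n} (hk : ¬ P k)
    (o : pObj P k) : o = none := by
  cases o with
  | none => rfl
  | some pk => exact absurd pk.down hk

lemma θ_bij {n : ℕ} (P : Fin n → Prop) {a b : Fin n} (hiff : P a ↔ P b) :
    Function.Bijective (θ P a b) := by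
  by_cases ha : P a
  · have hb := hiff.mp ha
    constructor
    · intro o1 o2 h
      cases o1 with
      | none => cases o2 with
        | none => rfl
        | some p2 => simp [θ, hb] at h
      | some p1 => cases o2 with
        | none => simp [θ, hb] at h
        | some p2 => exact congrArg some (Subsingleton.elim p1 p2)
    · intro o
      cases o with
      | none => exact ⟨none, rfl⟩
      | some pb =>
        refine ⟨some ⟨ha⟩, ?_⟩
        have : θ P a b (some ⟨ha⟩) = some ⟨hb⟩ := by simp [θ, hb]
        rw [this]
  · have hb := fun h => ha (hiff.mpr h)
    constructor
    · intro o1 o2 _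
      rw [pObj_eq_none ha o1, pObj_eq_none ha o2]
    · intro o
      rw [pObj_eq_none hb o]
      exact ⟨none, rfl⟩

lemma θ_not_bij {n : ℕ} (P : Fin n → Prop) {a b : Fin n} (hne : ¬ (P a ↔ P b)) :
    ¬ Function.Bijective (θ P a b) := by
  intro hbij
  by_cases ha : P a
  · have hb : ¬ P b := fun h => hne ⟨fun _ => h, fun _ => ha⟩
    have h1 : θ P a b (some ⟨ha⟩) = θ P a b none := by
      simp [θ, hb]
    have := hbij.1 h1
    simp at this
  · have hb : P b := by
      by_contra hb
      exact hne ⟨fun h => absurd h ha, fun h => absurd h hb⟩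
    obtain ⟨o, ho⟩ := hbij.2 (some ⟨hb⟩)
    rw [pObj_eq_none ha o] at ho
    simp [θ] at ho

end Helpers

/-- In the thin category of a finite linear order, `f` lies in the 2-out-of-6 closure of
`W` if and only if every functor into any category sending `W` to isomorphisms sends `f`
to an isomorphism. -/
theorem stmt8 (n : ℕ) (W : MorphismProperty (Fin n)) {x y : Fin n} (f : x ⟶ y) :
    Closure W f ↔
      ∀ (D : Type u) (_ : Category.{v} D) (ρ : Fin n ⥤ D),
        (∀ ⦃a b : Fin n⦄ (g : a ⟶ b), W g → IsIso (ρ.map g)) → IsIso (ρ.map f) := by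
  constructor
  · intro hf D _ ρ hρ
    induction hf with
    | of g hg => exact hρ _ hg
    | id X => rw [ρ.map_id]; infer_instance
    | left f g h h1 h2 ih1 ih2 =>
      rw [Functor.map_comp] at ih1 ih2
      exact (isoSix _ _ _ ih1 ih2).1
    | mid f g h h1 h2 ih1 ih2 =>
      rw [Functor.map_comp] at ih1 ih2
      exact (isoSix _ _ _ ih1 ih2).2.1
    | right f g h h1 h2 ih1 ih2 =>
      rw [Functor.map_comp] at ih1 ih2
      exact (isoSix _ _ _ ih1 ih2).2.2
    | comp f g h h1 h2 ih1 ih2 =>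
      rw [Functor.map_comp] at ih1 ih2
      obtain ⟨i1, i2, i3⟩ := isoSix _ _ _ ih1 ih2
      rw [Functor.map_comp, Functor.map_comp]
      infer_instance
  · intro H
    by_contra hf
    have hxy : x ≤ y := leOfHom f
    have hR : ¬ RR W x y := fun h => hf ((closure_iff W f).mpr (RR_clo W h hxy))
    obtain ⟨P, hint, hcomp, hne⟩ := exists_P W hxy hR
    have hW : ∀ ⦃a b : Fin n⦄ (g : a ⟶ b), W g →
        IsIso ((ρfun.{u} P hint).map g) := by
      intro a b g hg
      have hcl : clo W a b := (closure_iff W g).mp (Closure.of g hg)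
      rw [dd_isIso_iff, ρfun_map]
      exact θ_bij P (hcomp (leOfHom g) hcl)
    have hiso := H (DD.{u} P) (ddCat P) (ρfun.{u} P hint) hW
    rw [dd_isIso_iff, ρfun_map] at hiso
    exact θ_not_bij P hne hiso
end

section
/- Let Q be the thin category of a finite linear order, W ⊆ Mor(Q) a class satisfying the 2-out-of-6 property. Suppose f: a → m, w: m₀ → m with w ∈ W, and g: m₀ → a are morphisms of Q such that the span diagram represents the identity of a in the localization, in the precise sense that g ∘ w⁻¹ ∘ f = id_a in Q[W⁻¹]. Then f ∈ W and g ∈ W. -/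
/-!
In a linear order, 2-out-of-6 makes `Linked W` (being joined by a `W`-arrow) an equivalence
relation whose classes never cross: if `a ≤ b ≤ c ≤ d` with `a ~ c` and `b ~ d`, then all four
are linked. So the order-convex hulls of the classes are nested or disjoint, and for `i ≤ j` we
get `i ~ j` exactly when `i` and `j` lie in the hulls of the same classes. Sending `i` to the set
of hulls containing it, plus a point `none` absorbing the hulls that are left, is a functor to
types that inverts precisely the arrows of `W`. It factors through `Q[W⁻¹]`, so `W` is saturated.
In the theorem, `Q f` and `Q g` are isomorphisms because `g ≫ f = w` in a thin category.
-/

open CategoryTheory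

universe u v

section SpanningFunctor

variable {α : Type u} {ι : Type v} (S : ι → Set α)

open Classical in
noncomputable def restrictSpanning {i j : α} : Option {c // i ∈ S c} → Option {c // j ∈ S c}
  | none => none
  | some c => if h : j ∈ S c then some ⟨c, h⟩ else none

@[simp]
theorem restrictSpanning_none {i j : α} : restrictSpanning S (i := i) (j := j) none = none := rfl

theorem restrictSpanning_some_of_mem {i j : α} (c : {c // i ∈ S c}) (h : j ∈ S c) :
    restrictSpanning S (some c) = some ⟨c, h⟩ :=
  dif_pos h

theorem restrictSpanning_some_of_notMem {i j : α} (c : {c // i ∈ S c}) (h : j ∉ S c) :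
    restrictSpanning S (j := j) (some c) = none :=
  dif_neg h

theorem bijective_restrictSpanning_iff {i j : α} :
    Function.Bijective (restrictSpanning S (i := i) (j := j)) ↔ ∀ c, i ∈ S c ↔ j ∈ S c := by
  refine ⟨fun ⟨hinj, hsurj⟩ c => ⟨fun hi => ?_, fun hj => ?_⟩, fun h => ⟨?_, ?_⟩⟩
  · by_contra hj
    have := @hinj (some ⟨c, hi⟩) none (restrictSpanning_some_of_notMem S _ hj)
    simp at this
  · obtain ⟨_ | c', hc'⟩ := hsurj (some ⟨c, hj⟩)
    · simp at hc'
    · by_cases hj' : j ∈ S c'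
      · rw [restrictSpanning_some_of_mem S c' hj'] at hc'
        obtain rfl : c'.1 = c := by simpa using hc'
        exact c'.2
      · simp [restrictSpanning_some_of_notMem S c' hj'] at hc'
  · have hsome (c : {c // i ∈ S c}) := restrictSpanning_some_of_mem S c ((h c).1 c.2)
    rintro (_ | c) (_ | c') he
    · rfl
    · simp [hsome] at he
    · simp [hsome] at he
    · simpa [hsome, Subtype.ext_iff] using he
  · rintro (_ | ⟨c, hc⟩)
    · exact ⟨none, rfl⟩
    · exact ⟨some ⟨c, (h c).2 hc⟩, restrictSpanning_some_of_mem S _ hc⟩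

noncomputable def spanningFunctor [Preorder α] (hS : ∀ c, (S c).OrdConnected) : α ⥤ Type v where
  obj i := Option {c // i ∈ S c}
  map _ := TypeCat.ofHom (restrictSpanning S)
  map_id i := by
    ext (_ | c) : 3
    · rfl
    · simp [restrictSpanning_some_of_mem, c.2]
  map_comp {i j k} f g := by
    ext (_ | c) : 3
    · rfl
    · by_cases hj : j ∈ S c
      · by_cases hk : k ∈ S c
        · simp [restrictSpanning_some_of_mem, hj, hk]
        · simp [restrictSpanning_some_of_mem, restrictSpanning_some_of_notMem, hj, hk]
      · have hk : k ∉ S c := fun hk => hj ((hS c).out c.2 hk ⟨leOfHom f, leOfHom g⟩)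
        simp [restrictSpanning_some_of_notMem, hj, hk]

theorem isIso_spanningFunctor_map_iff [Preorder α] (hS : ∀ c, (S c).OrdConnected) {i j : α}
    (f : i ⟶ j) :
    IsIso ((spanningFunctor S hS).map f) ↔ ∀ c, i ∈ S c ↔ j ∈ S c :=
  (bijective_iff_isIso_ofHom _).symm.trans (bijective_restrictSpanning_iff S)

end SpanningFunctor

def Linked {C : Type*} [Category C] (W : MorphismProperty C) (i j : C) : Prop :=
  (∃ f : i ⟶ j, W f) ∨ ∃ f : j ⟶ i, W f

theorem Linked.symm {C : Type*} [Category C] {W : MorphismProperty C} {i j : C}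
    (h : Linked W i j) : Linked W j i :=
  Or.symm h

theorem linked_iff {α : Type*} [PartialOrder α] {W : MorphismProperty α} {i j : α} (f : i ⟶ j) :
    Linked W i j ↔ W f := by
  refine ⟨?_, fun hf => Or.inl ⟨f, hf⟩⟩
  rintro (⟨f', hf'⟩ | ⟨g, hg⟩)
  · rwa [Subsingleton.elim f f']
  · obtain rfl := le_antisymm (leOfHom f) (leOfHom g)
    rwa [Subsingleton.elim f g]

section LinearOrder

variable {α : Type u} [LinearOrder α] {W : MorphismProperty α}

theorem TwoOutOfSix.linked_refl (hW : TwoOutOfSix W) (i : α) : Linked W i i :=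
  Or.inl ⟨𝟙 i, hW.1 i⟩

theorem TwoOutOfSix.linked_cross (hW : TwoOutOfSix W) {a b c d : α}
    (hab : a ≤ b) (hbc : b ≤ c) (hcd : c ≤ d) (hac : Linked W a c) (hbd : Linked W b d) :
    Linked W a b ∧ Linked W b c ∧ Linked W c d ∧ Linked W a d := by
  let f := homOfLE hab
  let g := homOfLE hbc
  let h := homOfLE hcd
  rw [linked_iff (f ≫ g)] at hac
  rw [linked_iff (g ≫ h)] at hbd
  obtain ⟨hf, hg, hh, hfgh⟩ := hW.2 f g h hac hbd
  exact ⟨(linked_iff f).2 hf, (linked_iff g).2 hg, (linked_iff h).2 hh, (linked_iff _).2 hfgh⟩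

theorem TwoOutOfSix.linked_trans (hW : TwoOutOfSix W) {i j k : α}
    (hij : Linked W i j) (hjk : Linked W j k) : Linked W i k := by
  wlog hik : i ≤ k generalizing i k
  · exact (this hjk.symm hij.symm (le_of_not_ge hik)).symm
  rcases le_total j i with hji | hij'
  · exact (hW.linked_cross le_rfl hji hik hij.symm hjk).2.2.1
  rcases le_total j k with hjk' | hkj
  · exact (hW.linked_cross hij' le_rfl hjk' hij hjk).2.2.2
  · exact (hW.linked_cross hik hkj le_rfl hij hjk.symm).1

def linkedSpan (W : MorphismProperty α) (u : α) : Set α :=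
  {k | ∃ a b, Linked W u a ∧ Linked W u b ∧ a ≤ k ∧ k ≤ b}

theorem ordConnected_linkedSpan (u : α) : (linkedSpan W u).OrdConnected :=
  ⟨fun _ ⟨a, _, ha, _, hax, _⟩ _ ⟨_, b, _, hb, _, hyb⟩ _ ⟨hxz, hzy⟩ =>
    ⟨a, b, ha, hb, hax.trans hxz, hzy.trans hyb⟩⟩

theorem TwoOutOfSix.self_mem_linkedSpan (hW : TwoOutOfSix W) (u : α) : u ∈ linkedSpan W u :=
  ⟨u, u, hW.linked_refl u, hW.linked_refl u, le_rfl, le_rfl⟩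

theorem TwoOutOfSix.mem_linkedSpan_iff_of_linked (hW : TwoOutOfSix W) {i j : α} (hij : i ≤ j)
    (h : Linked W i j) (u : α) : i ∈ linkedSpan W u ↔ j ∈ linkedSpan W u := by
  constructor
  · rintro ⟨a, b, hua, hub, hai, hib⟩
    rcases le_total j b with hjb | hbj
    · exact ⟨a, b, hua, hub, hai.trans hij, hjb⟩
    · have hbj' := (hW.linked_cross hai hib hbj (hW.linked_trans hua.symm hub) h).2.2.1
      exact ⟨a, j, hua, hW.linked_trans hub hbj', hai.trans hij, le_rfl⟩
  · rintro ⟨a, b, hua, hub, haj, hjb⟩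
    rcases le_total a i with hai | hia
    · exact ⟨a, b, hua, hub, hai, hij.trans hjb⟩
    · have hia' := (hW.linked_cross hia haj hjb h (hW.linked_trans hua.symm hub)).1
      exact ⟨i, b, hW.linked_trans hua hia'.symm, hub, le_rfl, hij.trans hjb⟩

theorem TwoOutOfSix.linked_of_mem_linkedSpan_iff (hW : TwoOutOfSix W) {i j : α} (hij : i ≤ j)
    (h : ∀ u, i ∈ linkedSpan W u ↔ j ∈ linkedSpan W u) : Linked W i j := by
  obtain ⟨-, b, -, hib, -, hjb⟩ := (h i).1 (hW.self_mem_linkedSpan i)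
  obtain ⟨a, -, hja, -, hai, -⟩ := (h j).2 (hW.self_mem_linkedSpan j)
  exact (hW.linked_cross hai hij hjb hja.symm hib).2.1

noncomputable def linkedSpanFunctor (W : MorphismProperty α) : α ⥤ Type u :=
  spanningFunctor (linkedSpan W) ordConnected_linkedSpan

theorem TwoOutOfSix.isIso_linkedSpanFunctor_map_iff (hW : TwoOutOfSix W) {i j : α} (f : i ⟶ j) :
    IsIso ((linkedSpanFunctor W).map f) ↔ W f := by
  rw [linkedSpanFunctor, isIso_spanningFunctor_map_iff, ← linked_iff (W := W) f]
  exact ⟨hW.linked_of_mem_linkedSpan_iff (leOfHom f),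
    hW.mem_linkedSpan_iff_of_linked (leOfHom f)⟩

theorem TwoOutOfSix.of_isIso_Q_map (hW : TwoOutOfSix W) {i j : α} (f : i ⟶ j)
    [IsIso (W.Q.map f)] : W f := by
  have hF : W.IsInvertedBy (linkedSpanFunctor W) :=
    fun _ _ f hf => (hW.isIso_linkedSpanFunctor_map_iff f).2 hf
  have : IsIso ((W.Q ⋙ Localization.Construction.lift _ hF).map f) :=
    inferInstanceAs (IsIso ((Localization.Construction.lift _ hF).map (W.Q.map f)))
  rw [Localization.Construction.fac] at this
  exact (hW.isIso_linkedSpanFunctor_map_iff f).1 this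

end LinearOrder

theorem stmt10_general (n : ℕ) (W : MorphismProperty (Fin n)) (hW : TwoOutOfSix W)
    {a m m₀ : Fin n} (f : a ⟶ m) (w : m₀ ⟶ m) (g : m₀ ⟶ a)
    (q : W.Q.obj m ⟶ W.Q.obj m₀)
    (hq1 : W.Q.map w ≫ q = 𝟙 _) (hq2 : q ≫ W.Q.map w = 𝟙 _)
    (hid : W.Q.map f ≫ q ≫ W.Q.map g = 𝟙 (W.Q.obj a)) :
    W f ∧ W g := by
  have hgf : W.Q.map g ≫ W.Q.map f = W.Q.map w := by
    rw [← Functor.map_comp, Subsingleton.elim (g ≫ f) w]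
  have : IsIso (W.Q.map f) := ⟨⟨q ≫ W.Q.map g, hid, by rw [Category.assoc, hgf, hq2]⟩⟩
  have : IsIso (W.Q.map g) :=
    ⟨⟨W.Q.map f ≫ q, by rw [← Category.assoc, hgf, hq1], by rw [Category.assoc, hid]⟩⟩
  exact ⟨hW.of_isIso_Q_map f, hW.of_isIso_Q_map g⟩

/-- If the span `a ⟶f m ⟵w m₀ ⟶g a` (with `w ∈ W`) represents the identity of `a` in the
localization `Q[W⁻¹]` of the thin category of a finite linear order at a 2-out-of-6 class
`W`, i.e. `g ∘ w⁻¹ ∘ f = id` there, then `f ∈ W` and `g ∈ W`. -/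
theorem stmt10 (n : ℕ) (W : MorphismProperty (Fin n)) (hW : TwoOutOfSix W)
    {a m m₀ : Fin n} (f : a ⟶ m) (w : m₀ ⟶ m) (hw : W w) (g : m₀ ⟶ a)
    (q : W.Q.obj m ⟶ W.Q.obj m₀)
    (hq1 : W.Q.map w ≫ q = 𝟙 _) (hq2 : q ≫ W.Q.map w = 𝟙 _)
    (hid : W.Q.map f ≫ q ≫ W.Q.map g = 𝟙 (W.Q.obj a)) :
    W f ∧ W g :=
  stmt10_general n W hW f w g q hq1 hq2 hid
end

section
/- Let Q be the thin category of a finite linear order and W ⊆ Mor(Q) a 2-out-of-6 closed class. Define Mor'(a,b) as the set of equivalence classes of diagrams a →f m ←w m₀ →g b with w ∈ W (f, g arbitrary morphisms of Q), under the equivalence relation generated by: (f, w, g) ∼ (f', w', g') whenever there exist x: m → m' and x₀: m₀ → m₀' with x ∘ w = w' ∘ x₀, f' = x ∘ f and g = g' ∘ x₀. Then every morphism a →f m ←id_m m →g b (i.e., the image of an ordinary morphism g∘f of Q) with g ∘ f ∈ W is invertible in the resulting category: the class of b →id_b b ←{g∘f} a →id_a a is a two-sided inverse. -/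
open CategoryTheory

/-- A span (fraction) diagram `a ⟶f m ⟵w m₀ ⟶g b` with `w ∈ W`, representing the formal
composite `g ∘ w⁻¹ ∘ f` in the fraction model of the localization. -/
structure Span {N : ℕ} (W : MorphismProperty (Fin N)) (a b : Fin N) where
  m : Fin N
  m0 : Fin N
  f : a ⟶ m
  w : m0 ⟶ m
  hw : W w
  g : m0 ⟶ b

/-- The generating relation on spans: `(f, w, g) ∼ (f', w', g')` when there are
`x : m ⟶ m'` and `x₀ : m₀ ⟶ m₀'` with `x ∘ w = w' ∘ x₀`, `f' = x ∘ f`, `g = g' ∘ x₀`. -/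
def SpanRel {N : ℕ} (W : MorphismProperty (Fin N)) {a b : Fin N}
    (s s' : Span W a b) : Prop :=
  ∃ (x : s.m ⟶ s'.m) (x₀ : s.m0 ⟶ s'.m0),
    s.w ≫ x = x₀ ≫ s'.w ∧ s'.f = s.f ≫ x ∧ s.g = x₀ ≫ s'.g

/-- The identity span at `a`. -/
def idSpan {N : ℕ} {W : MorphismProperty (Fin N)} (hW : TwoOutOfSix W) (a : Fin N) :
    Span W a a :=
  ⟨a, a, 𝟙 a, 𝟙 a, hW.1 a, 𝟙 a⟩

/-- Composition of spans, defined case-by-case as in the fraction model of `Q[W⁻¹]`: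
if `y₀ : m₀ ⟶ n₀` exists the composite is `(f, w, k ∘ y₀)`; if `y : m ⟶ n` exists it is
`(y ∘ f, u, k)`; otherwise there are `z₀ : n₀ ⟶ m₀` and `z : n ⟶ m` and the composite is
`(f, z ∘ h ∘ g ∘ z₀, k)`, whose middle morphism lies in `W` by the 2-out-of-6 property. -/
def spanComp {N : ℕ} {W : MorphismProperty (Fin N)} (hW : TwoOutOfSix W) {a b c : Fin N}
    (s : Span W a b) (t : Span W b c) : Span W a c :=
  if h0 : s.m0 ≤ t.m0 then
    ⟨s.m, s.m0, s.f, s.w, s.hw, homOfLE h0 ≫ t.g⟩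
  else if h1 : s.m ≤ t.m then
    ⟨t.m, t.m0, s.f ≫ homOfLE h1, t.w, t.hw, t.g⟩
  else
    ⟨s.m, t.m0, s.f,
      homOfLE (le_of_not_ge h0) ≫ (s.g ≫ t.f) ≫ homOfLE (le_of_not_ge h1),
      by
        have hu : W (homOfLE (le_of_not_ge h0) ≫ (s.g ≫ t.f)) := by
          rw [Subsingleton.elim (homOfLE (le_of_not_ge h0) ≫ (s.g ≫ t.f)) t.w]
          exact t.hw
        have hv : W ((s.g ≫ t.f) ≫ homOfLE (le_of_not_ge h1)) := by
          rw [Subsingleton.elim ((s.g ≫ t.f) ≫ homOfLE (le_of_not_ge h1)) s.w]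
          exact s.hw
        exact (hW.2 _ _ _ hu hv).2.2.2,
      t.g⟩

/-! In a thin category parallel morphisms coincide, so whether two spans are related by
`SpanRel` depends only on their apexes `m` and `m₀`. Each of the composites falls into one
branch of `spanComp`, and its apexes are comparable with those of the identity span. -/

lemma spanRel_of_le {N : ℕ} {W : MorphismProperty (Fin N)} {a b : Fin N}
    {s s' : Span W a b} (hm : s.m ≤ s'.m) (hm0 : s.m0 ≤ s'.m0) : SpanRel W s s' :=
  ⟨homOfLE hm, homOfLE hm0, Subsingleton.elim _ _, Subsingleton.elim _ _,
    Subsingleton.elim _ _⟩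

/-- In the fraction model of `Q[W⁻¹]` for the thin category of a finite linear order and a
2-out-of-6 closed class `W`, the image `(f, id, g)` of an ordinary morphism `g ∘ f` of `Q`
with `g ∘ f ∈ W` is invertible: the span `(id_b, g∘f, id_a)` is a two-sided inverse, up to
the equivalence relation generated by `SpanRel`. -/
theorem stmt18 {N : ℕ} (W : MorphismProperty (Fin N)) (hW : TwoOutOfSix W)
    {a m b : Fin N} (f : a ⟶ m) (g : m ⟶ b) (hfg : W (f ≫ g)) :
    Relation.EqvGen (SpanRel W)
      (spanComp hW ⟨m, m, f, 𝟙 m, hW.1 m, g⟩ ⟨b, a, 𝟙 b, f ≫ g, hfg, 𝟙 a⟩)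
      (idSpan hW a) ∧
    Relation.EqvGen (SpanRel W)
      (spanComp hW ⟨b, a, 𝟙 b, f ≫ g, hfg, 𝟙 a⟩ ⟨m, m, f, 𝟙 m, hW.1 m, g⟩)
      (idSpan hW b) := by
  have hab : a ≤ b := leOfHom (f ≫ g)
  constructor
  · by_cases hma : m ≤ a
    · rw [spanComp, dif_pos hma]
      exact .rel _ _ (spanRel_of_le hma hma)
    · rw [spanComp, dif_neg hma, dif_pos (leOfHom g)]
      exact .symm _ _ (.rel _ _ (spanRel_of_le hab le_rfl))
  · rw [spanComp, dif_pos (leOfHom f)]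
    exact .rel _ _ (spanRel_of_le le_rfl hab)
end
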